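/- If f is a face of the positive semidefinite cone S^n_+ and X ∈ f has maximal rank r with orthogonal spectral decomposition X = [V U] diag(D, 0) [V U]^T where D is r×r positive definite, then f = V S^r_+ V^T, i.e., f consists exactly of matrices of the form V R V^T with R an r×r positive semidefinite matrix. -/

import Mathlib

/-!
For `Z ∈ f` the face also contains `X + Z`, whose kernel is `ker X ∩ ker Z` because both are
positive semidefinite. Maximality of the rank of `X` forces `ker (X + Z) = ker X`, so `Z`
vanishes on `ker Vᵀ ⊆ ker X` and hence `Z = V (Vᵀ Z V) Vᵀ`. Conversely, since `D` is positive
definite, every positive semidefinite `R` satisfies `R ≤ c D` for some `c ≥ 0`, so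
`V R Vᵀ + V (c D - R) Vᵀ = c X ∈ f` and the face property puts `V R Vᵀ` in `f`.
-/

open Matrix LinearMap

theorem Convex.add_mem_of_forall_smul_mem {E : Type*} [AddCommGroup E] [Module ℝ E] {s : Set E}
    (hs : Convex ℝ s) (hsmul : ∀ x ∈ s, ∀ c : ℝ, 0 ≤ c → c • x ∈ s) {x y : E} (hx : x ∈ s)
    (hy : y ∈ s) : x + y ∈ s := by
  have hmid : (1 / 2 : ℝ) • x + (1 / 2 : ℝ) • y ∈ s :=
    hs hx hy (by norm_num) (by norm_num) (by norm_num)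
  convert hsmul _ hmid 2 zero_le_two using 1
  module

theorem IsStrictlyPositive.exists_le_smul {A : Type*} [TopologicalSpace A] [Ring A] [StarRing A]
    [PartialOrder A] [StarOrderedRing A] [Algebra ℝ A] [NonnegSpectrumClass ℝ A]
    [ContinuousFunctionalCalculus ℝ A IsSelfAdjoint] [PosSMulMono ℝ A] {a b : A}
    (ha : IsStrictlyPositive a) (hb : IsSelfAdjoint b) : ∃ c : ℝ, 0 ≤ c ∧ b ≤ c • a := by
  cases subsingleton_or_nontrivial A
  · exact ⟨0, le_rfl, (Subsingleton.elim _ _).le⟩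
  obtain ⟨ε, hε, hεa⟩ := (CFC.exists_pos_algebraMap_le_iff ha.isSelfAdjoint).2
    fun x hx ↦ ha.spectrum_pos hx
  obtain ⟨M, hM⟩ :=
    (ContinuousFunctionalCalculus.isCompact_spectrum (R := ℝ) (p := IsSelfAdjoint) b).bddAbove
  refine ⟨max M 0 / ε, by positivity, ?_⟩
  calc b ≤ algebraMap ℝ A (max M 0) :=
        le_algebraMap_of_spectrum_le (fun x hx ↦ (hM hx).trans (le_max_left _ _)) hb
    _ = (max M 0 / ε) • algebraMap ℝ A ε := by
      rw [Algebra.algebraMap_eq_smul_one, Algebra.algebraMap_eq_smul_one, smul_smul,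
        div_mul_cancel₀ _ hε.ne']
    _ ≤ (max M 0 / ε) • a := smul_le_smul_of_nonneg_left hεa (by positivity)

namespace Matrix

variable {m n 𝕜 : Type*} [Fintype m] [Fintype n]

theorem mul_mul_conjTranspose_eq_of_ker_le [DecidableEq m] [Field 𝕜] [StarRing 𝕜]
    {V : Matrix n m 𝕜} {Z : Matrix n n 𝕜} (hV : Vᴴ * V = 1) (hZ : Z.IsHermitian)
    (h : ker Vᴴ.mulVecLin ≤ ker Z.mulVecLin) : V * (Vᴴ * Z * V) * Vᴴ = Z := by
  have hZV : Z * V * Vᴴ = Z := by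
    refine ext_iff_mulVec.2 fun u ↦ ?_
    have hker : u - V *ᵥ Vᴴ *ᵥ u ∈ ker Vᴴ.mulVecLin := by
      rw [mem_ker, mulVecLin_apply, mulVec_sub, mulVec_mulVec, hV, one_mulVec, sub_self]
    have hZu := h hker
    rw [mem_ker, mulVecLin_apply, mulVec_sub, sub_eq_zero] at hZu
    rw [hZu, ← mulVec_mulVec, ← mulVec_mulVec]
  have hVZ : V * (Vᴴ * Z) = Z := by
    simpa [conjTranspose_mul, hZ.eq, Matrix.mul_assoc] using congrArg conjTranspose hZV
  calc V * (Vᴴ * Z * V) * Vᴴ = V * (Vᴴ * Z) * V * Vᴴ := by simp only [Matrix.mul_assoc]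
    _ = Z := by rw [hVZ, hZV]

variable [RCLike 𝕜] {A B : Matrix n n 𝕜}

open scoped ComplexOrder

theorem PosSemidef.ker_add (hA : A.PosSemidef) (hB : B.PosSemidef) :
    ker (A + B).mulVecLin = ker A.mulVecLin ⊓ ker B.mulVecLin := by
  ext v
  simp only [mem_ker, mulVecLin_apply, Submodule.mem_inf]
  refine ⟨fun h ↦ ?_, fun ⟨hAv, hBv⟩ ↦ by rw [add_mulVec, hAv, hBv, add_zero]⟩
  have hsum : star v ⬝ᵥ A *ᵥ v + star v ⬝ᵥ B *ᵥ v = 0 := by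
    rw [← dotProduct_add, ← add_mulVec, h, dotProduct_zero]
  obtain ⟨hAv, hBv⟩ := (add_eq_zero_iff_of_nonneg (hA.dotProduct_mulVec_nonneg v)
    (hB.dotProduct_mulVec_nonneg v)).1 hsum
  exact ⟨(hA.dotProduct_mulVec_zero_iff v).1 hAv, (hB.dotProduct_mulVec_zero_iff v).1 hBv⟩

theorem PosSemidef.ker_le_ker_of_rank_add_le (hA : A.PosSemidef) (hB : B.PosSemidef)
    (h : (A + B).rank ≤ A.rank) : ker A.mulVecLin ≤ ker B.mulVecLin := by
  have hle : ker (A + B).mulVecLin ≤ ker A.mulVecLin := hA.ker_add hB ▸ inf_le_left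
  have hfinrank :
      Module.finrank 𝕜 (ker A.mulVecLin) ≤ Module.finrank 𝕜 (ker (A + B).mulVecLin) := by
    have := A.mulVecLin.finrank_range_add_finrank_ker
    have := (A + B).mulVecLin.finrank_range_add_finrank_ker
    unfold rank at h
    omega
  rw [← Submodule.eq_of_le_of_finrank_le hle hfinrank, hA.ker_add hB]
  exact inf_le_right

open scoped MatrixOrder in
theorem PosDef.exists_posSemidef_smul_sub [DecidableEq n] {D R : Matrix n n 𝕜} (hD : D.PosDef)
    (hR : R.IsHermitian) : ∃ c : ℝ, 0 ≤ c ∧ (c • D - R).PosSemidef :=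
  hD.isStrictlyPositive.exists_le_smul hR.isSelfAdjoint

end Matrix

theorem stmt1 {n r : ℕ} (f : Set (Matrix (Fin n) (Fin n) ℝ))
    (hfPSD : ∀ X ∈ f, X.PosSemidef)
    (hconvex : Convex ℝ f)
    (hcone : ∀ X ∈ f, ∀ c : ℝ, 0 ≤ c → c • X ∈ f)
    (hface : ∀ X Y : Matrix (Fin n) (Fin n) ℝ, X.PosSemidef → Y.PosSemidef →
      X + Y ∈ f → X ∈ f ∧ Y ∈ f)
    (X : Matrix (Fin n) (Fin n) ℝ) (hXf : X ∈ f)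
    (hmax : ∀ Y ∈ f, Y.rank ≤ r) (hrank : X.rank = r)
    (V : Matrix (Fin n) (Fin r) ℝ) (D : Matrix (Fin r) (Fin r) ℝ)
    (hV : Vᵀ * V = 1) (hD : D.PosDef)
    (hXdecomp : X = V * D * Vᵀ) :
    f = {Z | ∃ R : Matrix (Fin r) (Fin r) ℝ, R.PosSemidef ∧ Z = V * R * Vᵀ} := by
  simp only [← conjTranspose_eq_transpose_of_trivial] at hV hXdecomp ⊢
  ext Z
  constructor
  · intro hZ
    have hXZ : X + Z ∈ f := hconvex.add_mem_of_forall_smul_mem hcone hXf hZ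
    have hkerX : ker Vᴴ.mulVecLin ≤ ker X.mulVecLin := by
      rw [hXdecomp, mulVecLin_mul]
      exact ker_le_ker_comp _ _
    have hkerZ : ker X.mulVecLin ≤ ker Z.mulVecLin :=
      (hfPSD X hXf).ker_le_ker_of_rank_add_le (hfPSD Z hZ) (hrank ▸ hmax _ hXZ)
    refine ⟨Vᴴ * Z * V, ?_, ?_⟩
    · exact (hfPSD Z hZ).conjTranspose_mul_mul_same V
    · exact (mul_mul_conjTranspose_eq_of_ker_le hV (hfPSD Z hZ).isHermitian
        (hkerX.trans hkerZ)).symm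
  · rintro ⟨R, hR, rfl⟩
    obtain ⟨c, hc, hcDR⟩ := hD.exists_posSemidef_smul_sub hR.isHermitian
    have hsplit : V * R * Vᴴ + V * (c • D - R) * Vᴴ = c • X := by
      rw [hXdecomp, ← Matrix.add_mul, ← Matrix.mul_add, add_sub_cancel, Matrix.mul_smul,
        Matrix.smul_mul]
    refine (hface _ _ (hR.mul_mul_conjTranspose_same V) (hcDR.mul_mul_conjTranspose_same V)
      ?_).1
    rw [hsplit]
    exact hcone X hXf c hc
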